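/- If f : X → Y is a surjective α-irresolute map and X is α-Hurewicz, then Y is α-Hurewicz. -/

import Mathlib

open Filter Topology Set

def AlphaOpen {X : Type*} [TopologicalSpace X] (A : Set X) : Prop :=
  A ⊆ interior (closure (interior A))

def ThetaOpen {X : Type*} [TopologicalSpace X] (A : Set X) : Prop :=
  ∀ x ∈ A, ∃ B : Set X, IsOpen B ∧ x ∈ B ∧ closure B ⊆ A

def SemiOpen {X : Type*} [TopologicalSpace X] (A : Set X) : Prop :=
  A ⊆ closure (interior A)

/-- Generic Hurewicz-type selection principle for covers by sets satisfying `P`. -/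
def HurewiczFor (X : Type*) [TopologicalSpace X] (P : Set X → Prop) : Prop :=
  ∀ 𝒜 : ℕ → Set (Set X),
    (∀ k, (∀ U ∈ 𝒜 k, P U) ∧ ⋃₀ 𝒜 k = Set.univ) →
    ∃ ℬ : ℕ → Set (Set X),
      (∀ k, ℬ k ⊆ 𝒜 k ∧ (ℬ k).Finite) ∧
      ∀ x : X, ∀ᶠ k in Filter.atTop, x ∈ ⋃₀ ℬ k

def Hurewicz (X : Type*) [TopologicalSpace X] : Prop := HurewiczFor X IsOpen
def AlphaHurewicz (X : Type*) [TopologicalSpace X] : Prop := HurewiczFor X AlphaOpen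
def ThetaHurewicz (X : Type*) [TopologicalSpace X] : Prop := HurewiczFor X ThetaOpen
def MildlyHurewicz (X : Type*) [TopologicalSpace X] : Prop := HurewiczFor X IsClopen
def SemiHurewicz (X : Type*) [TopologicalSpace X] : Prop := HurewiczFor X SemiOpen

/-- Surjectivity makes `V ↦ f ⁻¹' V` injective, so a finite family of preimages comes from a
finite subfamily of the original cover. -/
theorem HurewiczFor.of_surjective {X Y : Type*} [TopologicalSpace X] [TopologicalSpace Y]
    {P : Set X → Prop} {Q : Set Y → Prop} (f : X → Y) (hf : Function.Surjective f)
    (hPQ : ∀ V, Q V → P (f ⁻¹' V)) (h : HurewiczFor X P) : HurewiczFor Y Q := by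
  intro 𝒜 h𝒜
  have hpre : Function.Injective (preimage f : Set Y → Set X) := preimage_injective.mpr hf
  obtain ⟨ℬ, hℬ, hcov⟩ := h (fun k => preimage f '' 𝒜 k) fun k => by
    refine ⟨?_, ?_⟩
    · rintro _ ⟨V, hV, rfl⟩
      exact hPQ V ((h𝒜 k).1 V hV)
    · rw [sUnion_image, ← preimage_iUnion₂, ← sUnion_eq_biUnion, (h𝒜 k).2, preimage_univ]
  refine ⟨fun k => 𝒜 k ∩ preimage f ⁻¹' ℬ k, fun k => ⟨inter_subset_left, ?_⟩, fun y => ?_⟩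
  · exact (hℬ k).2.preimage hpre.injOn |>.subset inter_subset_right
  · obtain ⟨x, rfl⟩ := hf y
    filter_upwards [hcov x] with k ⟨B, hB, hxB⟩
    obtain ⟨V, hV, rfl⟩ := (hℬ k).1 hB
    exact ⟨V, ⟨hV, hB⟩, hxB⟩

theorem alphaIrresolute_image_alphaHurewicz {X Y : Type*} [TopologicalSpace X]
    [TopologicalSpace Y] (f : X → Y) (hf : Function.Surjective f)
    (hc : ∀ V : Set Y, AlphaOpen V → AlphaOpen (f ⁻¹' V))
    (h : AlphaHurewicz X) : AlphaHurewicz Y :=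
  HurewiczFor.of_surjective f hf hc h
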